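/- Fix m ≥ 1 and 1 ≤ k ≤ N, and let β = (β[1] < β[2] < … < β[k]) be a strictly increasing sequence in {1,…,N}. Define u(β) ∈ ℕ^N by u(β)[β[j]] = m for 1 ≤ j ≤ k and u(β)[i] = 0 otherwise, let σ(β) = {β[1],…,β[k]}, and for 1 ≤ i ≤ N let χ_β(i) = N − i − #{l : β[l] > i}. Let M ∈ ℚ(q,t)[x₁,…,x_N] be a monic shifted nonsymmetric Macdonald polynomial for u(β). Then, substituting t^{χ_β(i)} for each variable x_i with i ∉ σ(β) and leaving the variables x_{β[1]},…,x_{β[k]} free, one has the identity M(x^{(β)}) = Π_{j=1}^{k} [ (x_{β[j]} − t^{N+j−k−β[j]}) · Π_{i=1}^{m−1} (x_{β[j]} − t^{N−k} q^{i}) ] in ℚ(q,t)[x_{β[1]},…,x_{β[k]}], where x^{(β)} denotes the point with coordinates x_i^{(β)} = x_i for i ∈ σ(β) and x_i^{(β)} = t^{χ_β(i)} for i ∉ σ(β). -/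

import Mathlib

open Finset MvPolynomial

noncomputable section

/-- `ℚ[q,t]`. -/
abbrev Qqt : Type := MvPolynomial (Fin 2) ℚ
/-- The field `ℚ(q,t)`. -/
abbrev Kqt : Type := FractionRing Qqt

/-- The parameter `q ∈ ℚ(q,t)`. -/
def qk : Kqt := algebraMap Qqt Kqt (X 0)
/-- The parameter `t ∈ ℚ(q,t)`. -/
def tk : Kqt := algebraMap Qqt Kqt (X 1)

/-- The rank function of `u ∈ ℕ^N`. -/
def rankf {N : ℕ} (u : Fin N → ℕ) (i : Fin N) : ℕ :=
  1 + (univ.filter fun k : Fin N => k < i ∧ u i ≤ u k).card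
    + (univ.filter fun k : Fin N => i < k ∧ u i < u k).card

/-- The spectral point `⟨u⟩ ∈ ℚ(q,t)^N`, `⟨u⟩[i] = q^{u[i]} t^{N − r_u[i]}`. -/
def specPt {N : ℕ} (u : Fin N → ℕ) (i : Fin N) : Kqt :=
  qk ^ u i * tk ^ (N - rankf u i)

/-- `M` is a monic shifted nonsymmetric Macdonald polynomial for `v ∈ ℕ^N`. -/
def MonicShiftedMacdonald {N : ℕ} (v : Fin N → ℕ) (M : MvPolynomial (Fin N) Kqt) : Prop :=
  M.totalDegree ≤ ∑ i, v i ∧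
  M.coeff (Finsupp.equivFunOnFinite.symm v) = 1 ∧
  ∀ u : Fin N → ℕ, (∑ i, u i) ≤ (∑ i, v i) → u ≠ v → eval (specPt u) M = 0

/-!
Write `T = σ(β)` and substitute `t^{χ_T(p)}` for the variables `x_p`, `p ∉ T`. The spectral
points `⟨z⟩`, `|z| ≤ d`, are unisolvent for polynomials of degree `≤ d`; this makes the
Knop–Sahi recursions available for any `F` vanishing like a shifted Macdonald polynomial for `v`:
if `v_N = 0`, then `F(t x₁, …, t x_{N-1}, 1)` vanishes like one for `(v₁, …, v_{N-1})`, since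
`1` is the last spectral coordinate of a trailing zero; if `v_N > 0`, then `F` vanishes on
`x_N = 1`, so `F = (x_N − 1) H`, and `H(x₂, …, x_N, q x₁)` vanishes like one for
`(v_N − 1, v₁, …, v_{N-1})`. Rectangles `(j + 1) 1_T` lie in a class of "rotated rectangles"
stable under both moves, and induction on `|v| + N` shows that the specialization of `F` is a
multiple of the product of the factors collected along the way. The multiple is `1`: the
coefficient of `∏ x_{β j}^m` after the substitution can only come from the monomial `x^{u(β)}`
of `M`, all other candidates having too large a degree.
-/

theorem Finset.prod_range_eq_mul_prod_Icc {M : Type*} [CommMonoid M] (f : ℕ → M) {m : ℕ}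
    (hm : m ≠ 0) :
    ∏ s ∈ range m, f s = f 0 * ∏ s ∈ Icc 1 (m - 1), f s := by
  obtain ⟨m, rfl⟩ := Nat.exists_eq_add_one_of_ne_zero hm
  have hIcc : Icc 1 m = Ico 1 (m + 1) := by ext; simp only [mem_Icc, mem_Ico]; omega
  rw [prod_range_succ', mul_comm, Nat.add_sub_cancel, hIcc, prod_Ico_eq_prod_range,
    Nat.add_sub_cancel]
  simp [add_comm]

theorem Fin.card_filter_univ_succAbove {N : ℕ} (i₀ : Fin (N + 1)) (P : Fin (N + 1) → Prop)
    [DecidablePred P] : #{r | P r} = (if P i₀ then 1 else 0) + #{j | P (i₀.succAbove j)} := by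
  simp only [card_filter, Fin.sum_univ_succAbove _ i₀]

namespace MvPolynomial

variable {R σ τ : Type*}

theorem totalDegree_aeval_le [CommSemiring R] (f : σ → MvPolynomial τ R)
    (hf : ∀ i, (f i).totalDegree ≤ 1) (F : MvPolynomial σ R) :
    (aeval f F).totalDegree ≤ F.totalDegree := by
  conv_lhs => rw [F.as_sum, map_sum]
  refine (totalDegree_finsetSum _ _).trans (Finset.sup_le fun s hs => ?_)
  rw [aeval_monomial, algebraMap_eq]
  calc (C (coeff s F) * s.prod fun i e => f i ^ e).totalDegree
      ≤ ∑ i ∈ s.support, (f i ^ s i : MvPolynomial τ R).totalDegree := by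
        refine (totalDegree_mul _ _).trans ?_
        rw [totalDegree_C, zero_add]
        exact totalDegree_finsetProd _ _
    _ ≤ ∑ i ∈ s.support, s i := by
        refine Finset.sum_le_sum fun i _ => (totalDegree_pow _ _).trans ?_
        simpa using Nat.mul_le_mul_left (s i) (hf i)
    _ ≤ F.totalDegree := le_totalDegree hs

theorem aeval_aeval [CommSemiring R] {υ : Type*} (f : τ → MvPolynomial υ R)
    (g : σ → MvPolynomial τ R) (F : MvPolynomial σ R) :
    aeval f (aeval g F) = aeval (fun i => aeval f (g i)) F :=
  aeval_bind₁ f g F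

theorem eval_aeval [CommSemiring R] (x : τ → R) (g : σ → MvPolynomial τ R)
    (F : MvPolynomial σ R) : eval x (aeval g F) = eval (fun i => eval x (g i)) F :=
  aeval_bind₁ x g F

theorem totalDegree_X_sub_C [CommRing R] [Nontrivial R] (i : σ) (a : R) :
    (X i - C a : MvPolynomial σ R).totalDegree = 1 := by
  refine le_antisymm ?_ ?_
  · simpa using totalDegree_sub (X i : MvPolynomial σ R) (C a)
  · classical
    have : Finsupp.single i 1 ∈ (X i - C a : MvPolynomial σ R).support := by
      rw [mem_support_iff, coeff_sub, coeff_X, coeff_C,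
        if_neg (Finsupp.single_ne_zero.2 one_ne_zero).symm]
      simp
    simpa using le_totalDegree this

theorem totalDegree_X_sub_C_mul [CommRing R] [IsDomain R] (i : σ) (a : R)
    {H : MvPolynomial σ R} (hH : H ≠ 0) :
    ((X i - C a) * H).totalDegree = H.totalDegree + 1 := by
  have hX : X i - C a ≠ 0 := fun h => by simpa [h] using totalDegree_X_sub_C i a
  rw [totalDegree_mul_of_isDomain hX hH, totalDegree_X_sub_C, add_comm]

theorem X_sub_C_dvd_sub_aeval_update [CommRing R] [DecidableEq σ] (i : σ) (a : R)
    (F : MvPolynomial σ R) : X i - C a ∣ F - aeval (Function.update X i (C a)) F := by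
  induction F using MvPolynomial.induction_on with
  | C c => simp
  | add p q hp hq => simpa [add_sub_add_comm] using dvd_add hp hq
  | mul_X p j hp =>
    have hXj : X i - C a ∣ X j - Function.update X i (C a) j := by
      rcases eq_or_ne j i with rfl | hj
      · simp
      · simp [Function.update_of_ne hj]
    have : p * X j - aeval (Function.update X i (C a)) (p * X j) =
        (p - aeval (Function.update X i (C a)) p) * X j +
          aeval (Function.update X i (C a)) p * (X j - Function.update X i (C a) j) := by
      rw [map_mul, aeval_X]; ring
    rw [this]
    exact dvd_add (hp.mul_right _) (hXj.mul_left _)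

theorem X_sub_C_dvd_of_aeval_update_eq_zero [CommRing R] [DecidableEq σ] {i : σ} {a : R}
    {F : MvPolynomial σ R} (h : aeval (Function.update X i (C a)) F = 0) : X i - C a ∣ F := by
  simpa only [h, sub_zero] using X_sub_C_dvd_sub_aeval_update i a F

theorem aeval_X_sub_C_of_eq_C_inv_mul {K : Type*} [Field K] (f : σ → MvPolynomial τ K) {i : σ}
    {c : K} {x : MvPolynomial τ K} (hc : c ≠ 0) (hf : f i = C c⁻¹ * x) (a : K) :
    aeval f (X i - C a) = C c⁻¹ * (x - C (c * a)) := by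
  rw [map_sub, aeval_X, aeval_C, algebraMap_eq, hf, mul_sub, ← C_mul, inv_mul_cancel_left₀ hc]

theorem eq_zero_of_aeval_C_mul_X_eq_zero {K : Type*} [Field K] {c : K} (hc : c ≠ 0)
    {F : MvPolynomial σ K} (h : aeval (fun i => C c * X i) F = 0) : F = 0 := by
  have hinv : (fun i => aeval (fun i => C c⁻¹ * X i) (C c * X i : MvPolynomial σ K)) = X := by
    funext i
    simp [← mul_assoc, ← C_mul, hc]
  rw [← aeval_X_left_apply F, ← hinv, ← aeval_aeval, h, map_zero]

/-- The product is monic, with leading monomial `x^d`, for any monomial order. -/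
theorem coeff_prod_prod_X_sub_C [CommRing R] [Fintype σ] (d : σ → ℕ) (r : σ → ℕ → R) :
    coeff (Finsupp.equivFunOnFinite.symm d) (∏ j, ∏ s ∈ range (d j), (X j - C (r j s))) = 1 := by
  nontriviality R
  obtain ⟨_, _⟩ := exists_wellFoundedGT σ
  let m : MonomialOrder σ := MonomialOrder.degLex
  have hmonic : ∀ j, m.Monic (∏ s ∈ range (d j), (X j - C (r j s))) := fun j =>
    MonomialOrder.Monic.prod fun s _ => m.monic_X_sub_C j _
  have hdeg : m.degree (∏ j, ∏ s ∈ range (d j), (X j - C (r j s))) =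
      Finsupp.equivFunOnFinite.symm d := by
    rw [m.degree_prod_of_regular fun j _ => (hmonic j).leadingCoeff_eq_one ▸ isRegular_one,
      Finsupp.equivFunOnFinite_symm_eq_sum]
    refine sum_congr rfl fun j _ => ?_
    rw [m.degree_prod_of_regular fun s _ =>
      (m.monic_X_sub_C j (r j s)).leadingCoeff_eq_one ▸ isRegular_one]
    simp [MonomialOrder.degree_X_sub_C]
  rw [← hdeg]
  exact (MonomialOrder.Monic.prod fun j _ => hmonic j).coeff_degree

theorem aeval_monomial_of_embedding [CommRing R] [Fintype σ] [Fintype τ] [DecidableEq τ]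
    (β : σ ↪ τ) {ξ : τ → MvPolynomial σ R} {a : τ → R}
    (hξβ : ∀ j, ξ (β j) = X j) (hξ : ∀ i ∉ univ.map β, ξ i = C (a i)) (w : τ →₀ ℕ) (c : R) :
    aeval ξ (monomial w c) = C (c * ∏ i ∈ (univ.map β)ᶜ, a i ^ w i) *
      monomial (Finsupp.equivFunOnFinite.symm (w ∘ β)) 1 := by
  have hcompl : ∏ i ∈ (univ.map β)ᶜ, ξ i ^ w i = ∏ i ∈ (univ.map β)ᶜ, C (a i) ^ w i :=
    prod_congr rfl fun i hi => by rw [hξ i (mem_compl.1 hi)]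
  rw [aeval_monomial, algebraMap_eq, Finsupp.prod_fintype _ _ fun _ => pow_zero _,
    ← prod_mul_prod_compl (univ.map β), prod_map, hcompl, monomial_eq,
    Finsupp.prod_fintype _ _ fun _ => pow_zero _]
  simp only [hξβ, C_mul, map_prod, C_pow, C_1, Finsupp.equivFunOnFinite_symm_apply_apply,
    Function.comp_apply, one_mul]
  ring

/-- Only the monomial `x^u` of `M` contributes: any other monomial sent to a multiple of
`y^{u ∘ β}` has larger degree than `u`. -/
theorem coeff_aeval_of_embedding [CommRing R] [Fintype σ] [Fintype τ] [DecidableEq τ]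
    (β : σ ↪ τ) {ξ : τ → MvPolynomial σ R} {a : τ → R}
    (hξβ : ∀ j, ξ (β j) = X j) (hξ : ∀ i ∉ univ.map β, ξ i = C (a i)) {u : τ → ℕ}
    (hu : ∀ i ∉ univ.map β, u i = 0) {M : MvPolynomial τ R} (hM : M.totalDegree ≤ ∑ i, u i) :
    coeff (Finsupp.equivFunOnFinite.symm (u ∘ β)) (aeval ξ M) =
      coeff (Finsupp.equivFunOnFinite.symm u) M := by
  classical
  have hsum : ∀ w : τ → ℕ, ∑ i, w i = ∑ j, w (β j) + ∑ i ∈ (univ.map β)ᶜ, w i := fun w => by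
    rw [← sum_map univ β, sum_add_sum_compl]
  conv_lhs => rw [M.as_sum, map_sum]
  rw [coeff_sum, sum_eq_single (Finsupp.equivFunOnFinite.symm u)]
  · rw [aeval_monomial_of_embedding β hξβ hξ, coeff_C_mul, coeff_monomial,
      Finsupp.coe_equivFunOnFinite_symm, if_pos rfl,
      prod_eq_one fun i hi => by simp [hu i (mem_compl.1 hi)], mul_one, mul_one]
  · intro w hw hwu
    rw [aeval_monomial_of_embedding β hξβ hξ, coeff_C_mul, coeff_monomial, if_neg, mul_zero]
    intro hwβ
    have hwβ' : ∀ j, w (β j) = u (β j) := fun j => by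
      simpa using DFunLike.congr_fun hwβ j
    have hdeg := (le_totalDegree hw).trans hM
    rw [Finsupp.sum_fintype _ _ fun _ => rfl, hsum w, hsum u, sum_congr rfl fun j _ => hwβ' j,
      sum_eq_zero fun i hi => hu i (mem_compl.1 hi)] at hdeg
    have hw0 : ∀ i ∈ (univ.map β)ᶜ, w i = 0 := sum_eq_zero_iff.1 (by omega)
    refine hwu (Finsupp.ext fun i => ?_)
    by_cases hi : i ∈ univ.map β
    · obtain ⟨j, -, rfl⟩ := mem_map.1 hi
      simpa using hwβ' j
    · simp [hw0 i (mem_compl.2 hi), hu i hi]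
  · intro hu'
    rw [notMem_support_iff.1 hu', monomial_zero, map_zero, coeff_zero]

end MvPolynomial

namespace ShiftedMacdonald

lemma qk_ne_zero : qk ≠ 0 :=
  (map_ne_zero_iff _ (IsFractionRing.injective Qqt Kqt)).2 (X_ne_zero _)

lemma tk_ne_zero : tk ≠ 0 :=
  (map_ne_zero_iff _ (IsFractionRing.injective Qqt Kqt)).2 (X_ne_zero _)

lemma qk_pow_mul_tk_pow_ne_one {a : ℕ} (ha : a ≠ 0) (b : ℕ) : qk ^ a * tk ^ b ≠ 1 := by
  intro h
  have h' : algebraMap Qqt Kqt (monomial (Finsupp.single 0 a + Finsupp.single 1 b) 1) =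
      algebraMap Qqt Kqt (monomial 0 1) := by
    simpa [qk, tk, ← map_pow, ← map_mul, X_pow_eq_monomial, monomial_mul] using h
  have := DFunLike.congr_fun
    (monomial_left_injective one_ne_zero (IsFractionRing.injective Qqt Kqt h')) 0
  exact ha (by simpa using this)

section Rank

variable {N : ℕ}

/-- The order on positions underlying `rankf`: decreasing entries of `u`, ties broken from left
to right. -/
abbrev RankPrec (u : Fin N → ℕ) (k i : Fin N) : Prop := u i < u k ∨ u i = u k ∧ k < i

lemma rankf_eq_one_add_card (u : Fin N → ℕ) (i : Fin N) :
    rankf u i = 1 + #{k | RankPrec u k i} := by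
  have hsplit : univ.filter (RankPrec u · i) =
      univ.filter (fun k => k < i ∧ u i ≤ u k) ∪ univ.filter (fun k => i < k ∧ u i < u k) := by
    ext k
    simp only [mem_filter, mem_univ, true_and, mem_union, RankPrec]
    rcases lt_trichotomy k i with h | rfl | h
    · simp [h, h.not_gt, le_iff_lt_or_eq]
    · simp
    · simp [h, h.not_gt]
  rw [hsplit, card_union_of_disjoint, rankf, add_assoc]
  exact disjoint_filter.2 fun k _ h h' => h.1.not_gt h'.1

lemma rankf_le (u : Fin N → ℕ) (i : Fin N) : rankf u i ≤ N := by
  have : #{k | RankPrec u k i} ≤ #(univ.erase i) :=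
    card_le_card fun k hk => mem_erase.2
      ⟨by rintro rfl; simp only [mem_filter] at hk; simp [RankPrec] at hk, mem_univ k⟩
  rw [card_erase_of_mem (mem_univ i), card_univ, Fintype.card_fin] at this
  rw [rankf_eq_one_add_card]
  have := i.pos
  omega

lemma rankf_add_one (z : Fin N → ℕ) : rankf (fun i => z i + 1) = rankf z := by
  funext i
  simp [rankf_eq_one_add_card, RankPrec]

lemma rankf_insertNth_zero_self (i₀ : Fin (N + 1)) (w : Fin N → ℕ)
    (hw : ∀ j, i₀ ≤ j.castSucc → 1 ≤ w j) :
    rankf (i₀.insertNth 0 w) i₀ = N + 1 := by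
  have hprec : ∀ j, RankPrec (i₀.insertNth 0 w) (i₀.succAbove j) i₀ := by
    intro j
    simp only [RankPrec, Fin.insertNth_apply_same, Fin.insertNth_apply_succAbove]
    rcases lt_or_ge j.castSucc i₀ with h | h
    · exact (Nat.eq_zero_or_pos (w j)).symm.imp id
        fun h0 => ⟨h0.symm, Fin.succAbove_of_castSucc_lt _ _ h ▸ h⟩
    · exact Or.inl (hw j h)
  rw [rankf_eq_one_add_card, Fin.card_filter_univ_succAbove i₀,
    filter_true_of_mem fun j _ => hprec j]
  simp [RankPrec, add_comm]

lemma rankf_insertNth_zero_succAbove (i₀ : Fin (N + 1)) (w : Fin N → ℕ)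
    (hw : ∀ j, i₀ ≤ j.castSucc → 1 ≤ w j) (j : Fin N) :
    rankf (i₀.insertNth 0 w) (i₀.succAbove j) = rankf w j := by
  have hnot : ¬ RankPrec (i₀.insertNth 0 w) i₀ (i₀.succAbove j) := by
    simp only [RankPrec, Fin.insertNth_apply_same, Fin.insertNth_apply_succAbove, not_lt_zero,
      false_or, not_and]
    intro h0 hlt
    rw [Fin.lt_succAbove_iff_le_castSucc] at hlt
    have := hw j hlt
    omega
  rw [rankf_eq_one_add_card, rankf_eq_one_add_card, Fin.card_filter_univ_succAbove i₀, if_neg hnot]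
  simp [RankPrec, Fin.succAbove_lt_succAbove_iff]

/-- The affine Knop–Sahi operator `Φ z = (z₂, …, z_N, z₁ + 1)`. -/
def affineShift (z : Fin (N + 1) → ℕ) : Fin (N + 1) → ℕ :=
  Fin.snoc (Fin.tail z) (z 0 + 1)

def affineShiftInv (v : Fin (N + 1) → ℕ) : Fin (N + 1) → ℕ :=
  Fin.cons (v (Fin.last N) - 1) (Fin.init v)

lemma affineShiftInv_affineShift (z : Fin (N + 1) → ℕ) : affineShiftInv (affineShift z) = z := by
  simp [affineShiftInv, affineShift, Fin.init_snoc, Fin.cons_self_tail]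

lemma affineShift_affineShiftInv {v : Fin (N + 1) → ℕ} (hv : v (Fin.last N) ≠ 0) :
    affineShift (affineShiftInv v) = v := by
  simp only [affineShift, affineShiftInv, Fin.tail_cons, Fin.cons_zero]
  rw [Nat.sub_add_cancel (Nat.one_le_iff_ne_zero.2 hv), Fin.snoc_init_self]

lemma sum_affineShift (z : Fin (N + 1) → ℕ) : ∑ r, affineShift z r = ∑ r, z r + 1 := by
  rw [Fin.sum_univ_castSucc, Fin.sum_univ_succ z]
  simp only [affineShift, Fin.snoc_castSucc, Fin.tail, Fin.snoc_last]
  ring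

lemma rankf_affineShift_castSucc (z : Fin (N + 1) → ℕ) (i : Fin N) :
    rankf (affineShift z) i.castSucc = rankf z i.succ := by
  rw [rankf_eq_one_add_card, rankf_eq_one_add_card, Fin.card_filter_univ_succAbove (Fin.last N),
    Fin.card_filter_univ_succAbove 0]
  simp [RankPrec, affineShift, Fin.tail, le_iff_lt_or_eq, not_lt.2 (Fin.le_last i.castSucc)]

lemma rankf_affineShift_last (z : Fin (N + 1) → ℕ) :
    rankf (affineShift z) (Fin.last N) = rankf z 0 := by
  rw [rankf_eq_one_add_card, rankf_eq_one_add_card, Fin.card_filter_univ_succAbove (Fin.last N),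
    Fin.card_filter_univ_succAbove 0]
  simp [RankPrec, affineShift, Fin.tail, Fin.castSucc_lt_last, ← le_iff_lt_or_eq]

end Rank

section SpectralPoints

variable {N : ℕ}

lemma specPt_add_one (z : Fin N → ℕ) : specPt (fun i => z i + 1) = fun i => qk * specPt z i := by
  funext i
  rw [specPt, specPt, rankf_add_one, pow_succ]
  ring

lemma specPt_insertNth_zero (i₀ : Fin (N + 1)) (w : Fin N → ℕ)
    (hw : ∀ j, i₀ ≤ j.castSucc → 1 ≤ w j) :
    specPt (i₀.insertNth 0 w) = i₀.insertNth 1 fun j => tk * specPt w j := by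
  funext r
  induction r using Fin.succAboveCases i₀ with
  | x => simp [specPt, rankf_insertNth_zero_self i₀ w hw]
  | p j =>
    have := rankf_le w j
    have := (rankf_eq_one_add_card w j).ge
    simp only [specPt, Fin.insertNth_apply_succAbove, rankf_insertNth_zero_succAbove i₀ w hw]
    rw [show N + 1 - rankf w j = N - rankf w j + 1 by omega, pow_succ]
    ring

lemma specPt_affineShift (z : Fin (N + 1) → ℕ) :
    specPt (affineShift z) = Fin.snoc (Fin.tail (specPt z)) (qk * specPt z 0) := by
  funext r
  induction r using Fin.lastCases with
  | last =>
    rw [Fin.snoc_last, specPt, specPt, rankf_affineShift_last, affineShift, Fin.snoc_last,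
      pow_succ]
    ring
  | cast i =>
    rw [Fin.snoc_castSucc, Fin.tail, specPt, specPt, rankf_affineShift_castSucc, affineShift,
      Fin.snoc_castSucc, Fin.tail]

end SpectralPoints

section Substitutions

variable {n : ℕ}

/-- Dual to inserting a zero entry at position `i₀` of `z`. -/
def insertZeroSubst (i₀ : Fin (n + 1)) : Fin (n + 1) → MvPolynomial (Fin n) Kqt :=
  i₀.insertNth 1 fun j => C tk * X j

/-- Dual to `affineShift`. -/
def affineShiftSubst : Fin (n + 1) → MvPolynomial (Fin (n + 1)) Kqt :=
  Fin.snoc (fun i => X i.succ) (C qk * X 0)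

lemma totalDegree_aeval_insertZeroSubst_le (i₀ : Fin (n + 1))
    (F : MvPolynomial (Fin (n + 1)) Kqt) :
    (aeval (insertZeroSubst i₀) F).totalDegree ≤ F.totalDegree := by
  refine totalDegree_aeval_le _ (fun r => ?_) F
  induction r using Fin.succAboveCases i₀ with
  | x => simp [insertZeroSubst]
  | p j =>
    simpa [insertZeroSubst] using (totalDegree_mul (C tk) (X j : MvPolynomial (Fin n) Kqt)).trans
      (by simp [totalDegree_X])

lemma totalDegree_aeval_affineShiftSubst_le (F : MvPolynomial (Fin (n + 1)) Kqt) :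
    (aeval affineShiftSubst F).totalDegree ≤ F.totalDegree := by
  refine totalDegree_aeval_le _ (fun r => ?_) F
  induction r using Fin.lastCases with
  | last =>
    simpa [affineShiftSubst] using (totalDegree_mul (C qk) (X 0 : MvPolynomial _ Kqt)).trans
      (by simp [totalDegree_X])
  | cast i => simp [affineShiftSubst, totalDegree_X]

lemma eval_specPt_aeval_insertZeroSubst (i₀ : Fin (n + 1)) (w : Fin n → ℕ)
    (hw : ∀ j, i₀ ≤ j.castSucc → 1 ≤ w j) (F : MvPolynomial (Fin (n + 1)) Kqt) :
    eval (specPt w) (aeval (insertZeroSubst i₀) F) = eval (specPt (i₀.insertNth 0 w)) F := by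
  rw [eval_aeval, specPt_insertNth_zero i₀ w hw]
  refine congrArg (fun x => eval x F) (funext fun r => ?_)
  induction r using Fin.succAboveCases i₀ with
  | x => simp [insertZeroSubst]
  | p j => simp [insertZeroSubst]

lemma eval_specPt_aeval_affineShiftSubst (z : Fin (n + 1) → ℕ)
    (F : MvPolynomial (Fin (n + 1)) Kqt) :
    eval (specPt z) (aeval affineShiftSubst F) = eval (specPt (affineShift z)) F := by
  rw [eval_aeval, specPt_affineShift]
  refine congrArg (fun x => eval x F) (funext fun r => ?_)
  induction r using Fin.lastCases with
  | last => simp [affineShiftSubst]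
  | cast i => simp [affineShiftSubst, Fin.tail]

lemma X_sub_one_dvd_of_aeval_insertZeroSubst_eq_zero {i₀ : Fin (n + 1)}
    {F : MvPolynomial (Fin (n + 1)) Kqt} (h : aeval (insertZeroSubst i₀) F = 0) :
    X i₀ - C 1 ∣ F := by
  refine X_sub_C_dvd_of_aeval_update_eq_zero ?_
  have hinv : (fun r => aeval (fun j => C tk⁻¹ * X (i₀.succAbove j)) (insertZeroSubst i₀ r)) =
      Function.update X i₀ (C 1) := by
    funext r
    induction r using Fin.succAboveCases i₀ with
    | x => simp [insertZeroSubst]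
    | p j =>
      simp [insertZeroSubst, Fin.succAbove_ne, ← mul_assoc, ← C_mul, tk_ne_zero]
  rw [← hinv, ← aeval_aeval, h, map_zero]

end Substitutions

section Unisolvence

lemma eval_specPt_aeval_C_qk_mul_X {N : ℕ} (w : Fin N → ℕ) (F : MvPolynomial (Fin N) Kqt) :
    eval (specPt w) (aeval (fun i => C qk * X i) F) = eval (specPt fun i => w i + 1) F := by
  rw [eval_aeval, specPt_add_one]
  simp

/-- The form of `eq_zero_of_eval_specPt_eq_zero` that carries the induction on `p`. -/
lemma eq_zero_of_eval_specPt_eq_zero_of_pos (d p : ℕ) : ∀ (N : ℕ), p ≤ N →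
    ∀ F : MvPolynomial (Fin N) Kqt, F.totalDegree + (N - p) ≤ d →
    (∀ z : Fin N → ℕ, ∑ i, z i ≤ d → (∀ i : Fin N, p ≤ i → 1 ≤ z i) →
      eval (specPt z) F = 0) → F = 0 := by
  induction d using Nat.strong_induction_on generalizing p with
  | _ d IHd =>
  induction p with
  | zero =>
    intro N _ F hdeg hvan
    rcases Nat.eq_zero_or_pos N with rfl | hN
    · rw [F.eq_C_of_isEmpty] at hvan ⊢
      simpa using hvan isEmptyElim (by simp) isEmptyElim
    -- all entries are positive, so `z = w + 1` and we may divide the coordinates by `q`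
    have hdeg' : (aeval (fun i => C qk * X i) F).totalDegree ≤ F.totalDegree :=
      totalDegree_aeval_le _ (fun i => (totalDegree_mul _ _).trans (by simp [totalDegree_X])) F
    refine eq_zero_of_aeval_C_mul_X_eq_zero qk_ne_zero <|
      IHd (d - N) (by omega) N N le_rfl _ (by omega) fun w hw _ => ?_
    rw [eval_specPt_aeval_C_qk_mul_X]
    have hsum : ∑ i, (w i + 1) = ∑ i, w i + N := by simp [sum_add_distrib]
    exact hvan _ (by omega) fun _ _ => by omega
  | succ p IHp =>
    intro N hpN F hdeg hvan
    obtain ⟨n, rfl⟩ : ∃ n, N = n + 1 := ⟨N - 1, by omega⟩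
    obtain ⟨i₀, hi₀⟩ : ∃ i₀ : Fin (n + 1), (i₀ : ℕ) = p := ⟨⟨p, by omega⟩, rfl⟩
    -- at `z` with `z_{i₀} = 0` and `z` positive after `i₀`, the coordinate `i₀` of `⟨z⟩` is `1`
    have hrestrict : aeval (insertZeroSubst i₀) F = 0 := by
      refine IHp n (by omega) _ ?_ fun w hw hwpos => ?_
      · have := totalDegree_aeval_insertZeroSubst_le i₀ F
        omega
      · have hwpos' : ∀ j, i₀ ≤ j.castSucc → 1 ≤ w j := fun j hj =>
          hwpos j (by rw [Fin.le_def] at hj; simpa [hi₀] using hj)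
        rw [eval_specPt_aeval_insertZeroSubst i₀ w hwpos']
        refine hvan _ (by simpa [Fin.sum_univ_succAbove _ i₀] using hw) fun r hr => ?_
        have hr' : i₀ < r := Fin.lt_def.2 (by omega)
        obtain ⟨j, rfl⟩ := Fin.exists_succAbove_eq hr'.ne'
        simpa using hwpos' j ((Fin.lt_succAbove_iff_le_castSucc i₀ j).1 hr')
    obtain ⟨H, rfl⟩ := X_sub_one_dvd_of_aeval_insertZeroSubst_eq_zero hrestrict
    rcases eq_or_ne H 0 with rfl | hH
    · rw [mul_zero]
    rw [totalDegree_X_sub_C_mul _ _ hH] at hdeg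
    -- `H` vanishes wherever `X i₀ - 1` does not, in particular when `z_{i₀} ≥ 1`
    rw [IHp (n + 1) (by omega) H (by omega) fun z hz hzpos => ?_, mul_zero]
    have hz₀ : specPt z i₀ ≠ 1 := qk_pow_mul_tk_pow_ne_one (by have := hzpos i₀ hi₀.ge; omega) _
    simpa [sub_eq_zero, hz₀] using hvan z hz fun i hi => hzpos i (by omega)

lemma eq_zero_of_eval_specPt_eq_zero {N d : ℕ} {F : MvPolynomial (Fin N) Kqt}
    (hdeg : F.totalDegree ≤ d) (hvan : ∀ z : Fin N → ℕ, ∑ i, z i ≤ d → eval (specPt z) F = 0) :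
    F = 0 :=
  eq_zero_of_eval_specPt_eq_zero_of_pos d N N le_rfl F (by simpa using hdeg)
    fun z hz _ => hvan z hz

end Unisolvence

section Multiples

variable {n N : ℕ}

/-- `F` is a scalar multiple (possibly zero) of the shifted Macdonald polynomial for `v`. -/
def IsShiftedMacdonaldMultiple (v : Fin N → ℕ) (F : MvPolynomial (Fin N) Kqt) : Prop :=
  F.totalDegree ≤ ∑ i, v i ∧
    ∀ z : Fin N → ℕ, ∑ i, z i ≤ ∑ i, v i → z ≠ v → eval (specPt z) F = 0

lemma _root_.MonicShiftedMacdonald.isShiftedMacdonaldMultiple {v : Fin N → ℕ}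
    {M : MvPolynomial (Fin N) Kqt} (hM : MonicShiftedMacdonald v M) :
    IsShiftedMacdonaldMultiple v M :=
  ⟨hM.1, hM.2.2⟩

namespace IsShiftedMacdonaldMultiple

lemma eq_C_of_eq_zero {v : Fin N → ℕ} {F : MvPolynomial (Fin N) Kqt}
    (hF : IsShiftedMacdonaldMultiple v F) (hv : ∀ i, v i = 0) : F = C (coeff 0 F) :=
  totalDegree_eq_zero_iff_eq_C.1 (by simpa [hv] using hF.1)

lemma aeval_insertZeroSubst_last {v : Fin (n + 1) → ℕ} {F : MvPolynomial (Fin (n + 1)) Kqt}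
    (hF : IsShiftedMacdonaldMultiple v F) (hv : v (Fin.last n) = 0) :
    IsShiftedMacdonaldMultiple (Fin.init v) (aeval (insertZeroSubst (Fin.last n)) F) := by
  have hsum : ∑ i, v i = ∑ i, Fin.init v i := by simp [Fin.sum_univ_castSucc, hv, Fin.init]
  refine ⟨(totalDegree_aeval_insertZeroSubst_le _ F).trans (hsum ▸ hF.1), fun w hw hwv => ?_⟩
  rw [eval_specPt_aeval_insertZeroSubst _ w fun j hj => absurd hj (Fin.castSucc_lt_last j).not_ge]
  refine hF.2 _ (by simpa [Fin.sum_univ_castSucc, hsum] using hw) fun h => hwv ?_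
  rw [← h, Fin.insertNth_last', Fin.init_snoc]

lemma X_last_sub_one_dvd {v : Fin (n + 1) → ℕ} {F : MvPolynomial (Fin (n + 1)) Kqt}
    (hF : IsShiftedMacdonaldMultiple v F) (hv : v (Fin.last n) ≠ 0) :
    X (Fin.last n) - C 1 ∣ F := by
  refine X_sub_one_dvd_of_aeval_insertZeroSubst_eq_zero <|
    eq_zero_of_eval_specPt_eq_zero ((totalDegree_aeval_insertZeroSubst_le _ F).trans hF.1)
      fun w hw => ?_
  rw [eval_specPt_aeval_insertZeroSubst _ w fun j hj => absurd hj (Fin.castSucc_lt_last j).not_ge]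
  refine hF.2 _ (by simpa [Fin.sum_univ_castSucc] using hw) fun h => hv ?_
  rw [← h, Fin.insertNth_apply_same]

lemma sum_affineShiftInv {v : Fin (n + 1) → ℕ} (hv : v (Fin.last n) ≠ 0) :
    ∑ i, affineShiftInv v i = ∑ i, v i - 1 := by
  have := sum_affineShift (affineShiftInv v)
  rw [affineShift_affineShiftInv hv] at this
  omega

/-- The Knop–Sahi recursion. -/
lemma aeval_affineShiftSubst {v : Fin (n + 1) → ℕ} {H : MvPolynomial (Fin (n + 1)) Kqt}
    (hF : IsShiftedMacdonaldMultiple v ((X (Fin.last n) - C 1) * H)) (hv : v (Fin.last n) ≠ 0) :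
    IsShiftedMacdonaldMultiple (affineShiftInv v) (aeval affineShiftSubst H) := by
  rw [IsShiftedMacdonaldMultiple, sum_affineShiftInv hv]
  refine ⟨(totalDegree_aeval_affineShiftSubst_le H).trans ?_, fun z hz hzv => ?_⟩
  · rcases eq_or_ne H 0 with rfl | hH
    · simp
    · have := hF.1
      rw [totalDegree_X_sub_C_mul _ _ hH] at this
      omega
  rw [eval_specPt_aeval_affineShiftSubst]
  have hΦz : specPt (affineShift z) (Fin.last n) ≠ 1 := by
    simpa [specPt, affineShift] using qk_pow_mul_tk_pow_ne_one (z 0).succ_ne_zero _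
  have hsum := sum_affineShift z
  have hvpos : v (Fin.last n) ≤ ∑ i, v i := single_le_sum (by simp) (mem_univ _)
  have := hF.2 (affineShift z) (by omega) fun h => hzv (by
    rw [← h, affineShiftInv_affineShift])
  simpa [sub_eq_zero, hΦz] using this

end IsShiftedMacdonaldMultiple

end Multiples

section Rectangles

variable {n N : ℕ}

/-- Positions are counted from `0`: this is `χ_β(i) = N − i − #{r ∈ T : r > i}` at
`i = p + 1`. -/
def chi (T : Finset (Fin N)) (p : Fin N) : ℕ := N - 1 - p - #{r | r ∈ T ∧ p < r}

def stripLast (T : Finset (Fin (n + 1))) : Finset (Fin n) := {j | j.castSucc ∈ T}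

def rotate (T : Finset (Fin (n + 1))) : Finset (Fin (n + 1)) :=
  T.map (finRotate (n + 1)).toEmbedding

/-- For `a = 0` this is the rectangle `(j + 1) 1_T`; when all positions `< a` lie in `T`, the
shape is preserved by `affineShiftInv` and by `Fin.init`. -/
def rotatedRectangle (T : Finset (Fin N)) (a j : ℕ) (p : Fin N) : ℕ :=
  if p ∈ T then (if (p : ℕ) < a then j else j + 1) else 0

lemma card_filter_mem_lt_add_le (T : Finset (Fin N)) (p : Fin N) :
    #{r | r ∈ T ∧ p < r} + p + 1 ≤ N := by
  have h := card_le_card (s := {r | r ∈ T ∧ p < r}) (t := Ioi p) fun r hr => by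
    simp only [mem_filter] at hr; simpa using hr.2.2
  rw [Fin.card_Ioi] at h
  have := p.isLt
  omega

lemma chi_last (T : Finset (Fin (n + 1))) : chi T (Fin.last n) = 0 := by
  simp [chi]

lemma card_filter_mem_castSucc_lt (T : Finset (Fin (n + 1))) (p : Fin n) :
    #{r | r ∈ T ∧ p.castSucc < r} =
      (if Fin.last n ∈ T then 1 else 0) + #{j | j ∈ stripLast T ∧ p < j} := by
  rw [Fin.card_filter_univ_succAbove (Fin.last n)]
  simp [stripLast, Fin.castSucc_lt_last]

lemma chi_castSucc (T : Finset (Fin (n + 1))) (hT : Fin.last n ∉ T) (p : Fin n) :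
    chi T p.castSucc = chi (stripLast T) p + 1 := by
  have := card_filter_mem_lt_add_le (stripLast T) p
  simp only [chi, card_filter_mem_castSucc_lt, hT, if_false, Fin.val_castSucc]
  omega

lemma card_stripLast (T : Finset (Fin (n + 1))) :
    #T = (if Fin.last n ∈ T then 1 else 0) + #(stripLast T) := by
  rw [← filter_univ_mem T, Fin.card_filter_univ_succAbove (Fin.last n)]
  simp [stripLast]

lemma zero_mem_rotate {T : Finset (Fin (n + 1))} : 0 ∈ rotate T ↔ Fin.last n ∈ T := by
  rw [rotate, ← finRotate_last, ← Equiv.coe_toEmbedding, mem_map']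

lemma succ_mem_rotate {T : Finset (Fin (n + 1))} {j : Fin n} :
    j.succ ∈ rotate T ↔ j.castSucc ∈ T := by
  have : finRotate (n + 1) j.castSucc = j.succ := Fin.ext (by simp)
  rw [rotate, ← this, ← Equiv.coe_toEmbedding, mem_map']

lemma card_rotate (T : Finset (Fin (n + 1))) : #(rotate T) = #T := card_map _

lemma chi_rotate_succ (T : Finset (Fin (n + 1))) (hT : Fin.last n ∈ T) (p : Fin n) :
    chi (rotate T) p.succ = chi T p.castSucc := by
  have := card_filter_mem_lt_add_le (stripLast T) p
  have hrot : #{r | r ∈ rotate T ∧ p.succ < r} = #{j | j ∈ stripLast T ∧ p < j} := by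
    rw [Fin.card_filter_univ_succAbove 0]
    simp [succ_mem_rotate, stripLast]
  simp only [chi, hrot, card_filter_mem_castSucc_lt, hT, if_true, Fin.val_castSucc, Fin.val_succ]
  omega

lemma chi_rotate_zero (T : Finset (Fin (n + 1))) (hT : Fin.last n ∈ T) :
    chi (rotate T) 0 = n + 1 - #T := by
  have hrot : #{r | r ∈ rotate T ∧ 0 < r} = #(stripLast T) := by
    rw [Fin.card_filter_univ_succAbove 0]
    simp [succ_mem_rotate, stripLast, Fin.succ_pos]
  simp only [chi, hrot, card_stripLast T, hT, if_true, Fin.val_zero]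
  omega

lemma init_rotatedRectangle (T : Finset (Fin (n + 1))) (a j : ℕ) :
    Fin.init (rotatedRectangle T a j) = rotatedRectangle (stripLast T) a j := by
  funext p
  simp [Fin.init, rotatedRectangle, stripLast]

lemma last_mem_of_rotatedRectangle_last_ne_zero {T : Finset (Fin (n + 1))} {a j : ℕ}
    (hv : rotatedRectangle T a j (Fin.last n) ≠ 0) : Fin.last n ∈ T := by
  by_contra h
  simp [rotatedRectangle, h] at hv

lemma rotatedRectangle_last_ne_zero_of_mem {T : Finset (Fin (n + 1))} {a j : ℕ}
    (hpre : ∀ p : Fin (n + 1), (p : ℕ) < a → p ∈ T) (hT : Fin.last n ∈ T)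
    (hv : ¬ ∀ p, rotatedRectangle T a j p = 0) : rotatedRectangle T a j (Fin.last n) ≠ 0 := by
  intro h
  simp only [rotatedRectangle, hT, if_true, Fin.val_last] at h
  split_ifs at h
  refine hv fun p => ?_
  have hp : (p : ℕ) < a := by have := p.isLt; omega
  simp [rotatedRectangle, hpre p hp, hp, h]

lemma affineShiftInv_rotatedRectangle {T : Finset (Fin (n + 1))} {a j : ℕ}
    (hpre : ∀ p : Fin (n + 1), (p : ℕ) < a → p ∈ T)
    (hv : rotatedRectangle T a j (Fin.last n) ≠ 0) :
    ∃ a' j', (∀ p : Fin (n + 1), (p : ℕ) < a' → p ∈ rotate T) ∧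
      affineShiftInv (rotatedRectangle T a j) = rotatedRectangle (rotate T) a' j' := by
  have hT := last_mem_of_rotatedRectangle_last_ne_zero hv
  rcases le_or_gt a n with han | han
  · refine ⟨a + 1, j, fun p hp => ?_, funext fun p => ?_⟩
    · induction p using Fin.cases with
      | zero => exact zero_mem_rotate.2 hT
      | succ i => exact succ_mem_rotate.2 (hpre _ (by simpa using hp))
    · induction p using Fin.cases with
      | zero => simp [affineShiftInv, rotatedRectangle, hT, zero_mem_rotate, han.not_gt]
      | succ i => simp [affineShiftInv, rotatedRectangle, succ_mem_rotate, Fin.init]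
  · -- here every position lies in `T` and carries the entry `j`
    have hj : j ≠ 0 := by simpa [rotatedRectangle, hT, han] using hv
    refine ⟨1, j - 1, fun p hp => ?_, funext fun p => ?_⟩
    · obtain rfl : p = 0 := Fin.ext (by simpa using hp)
      exact zero_mem_rotate.2 hT
    · induction p using Fin.cases with
      | zero => simp [affineShiftInv, rotatedRectangle, hT, zero_mem_rotate, han]
      | succ i =>
        have hi : ((i.castSucc : Fin (n + 1)) : ℕ) < a := by
          simp only [Fin.val_castSucc]; omega
        rw [affineShiftInv, Fin.cons_succ, Fin.init, rotatedRectangle, rotatedRectangle,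
          if_pos (hpre _ hi), if_pos hi, if_pos (succ_mem_rotate.2 (hpre _ hi)),
          if_neg (by simp)]
        omega

end Rectangles

section Specialization

variable {n N : ℕ}

def specializeOff (T : Finset (Fin N)) (p : Fin N) : MvPolynomial (Fin N) Kqt :=
  if p ∈ T then X p else C (tk ^ chi T p)

def rectRoot (T : Finset (Fin N)) (p : Fin N) (s : ℕ) : Kqt :=
  if s = 0 then tk ^ chi T p else tk ^ (N - #T) * qk ^ s

def rectFactor (T : Finset (Fin N)) (v : Fin N → ℕ) (p : Fin N) : MvPolynomial (Fin N) Kqt :=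
  ∏ s ∈ range (v p), (X p - C (rectRoot T p s))

lemma specializeOff_of_mem {T : Finset (Fin N)} {p : Fin N} (hp : p ∈ T) :
    specializeOff T p = X p :=
  if_pos hp

lemma specializeOff_of_notMem {T : Finset (Fin N)} {p : Fin N} (hp : p ∉ T) :
    specializeOff T p = C (tk ^ chi T p) :=
  if_neg hp

lemma prod_rectFactor_of_eq_zero (T : Finset (Fin N)) {v : Fin N → ℕ} (hv : ∀ p, v p = 0) :
    ∏ p, rectFactor T v p = 1 :=
  prod_eq_one fun p _ => by simp [rectFactor, hv]

lemma aeval_rectFactor_stripLast {T : Finset (Fin (n + 1))} (hT : Fin.last n ∉ T)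
    (v : Fin (n + 1) → ℕ) (p : Fin n) :
    aeval (fun i : Fin n => C tk⁻¹ * X i.castSucc) (rectFactor (stripLast T) (Fin.init v) p) =
      C (tk⁻¹ ^ v p.castSucc) * rectFactor T v p.castSucc := by
  have hcard : #(stripLast T) = #T := by simp [card_stripLast T, hT]
  have hTn : #T ≤ n := by
    have := card_le_univ (stripLast T); simp only [Fintype.card_fin] at this; omega
  have hroot : ∀ s, tk * rectRoot (stripLast T) p s = rectRoot T p.castSucc s := by
    intro s
    rcases eq_or_ne s 0 with rfl | hs
    · simp [rectRoot, chi_castSucc T hT, pow_succ']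
    · simp only [rectRoot, if_neg hs, hcard, show n + 1 - #T = n - #T + 1 by omega, pow_succ']
      ring
  have hinit : Fin.init v p = v p.castSucc := rfl
  have hlin := aeval_X_sub_C_of_eq_C_inv_mul (fun i : Fin n => C tk⁻¹ * X i.castSucc) (i := p)
    tk_ne_zero rfl
  rw [rectFactor, rectFactor, map_prod, hinit, prod_congr rfl fun s _ => by rw [hlin, hroot],
    prod_mul_distrib, prod_const, card_range, C_pow]

lemma aeval_specializeOff_eq_aeval_stripLast {T : Finset (Fin (n + 1))} (hT : Fin.last n ∉ T)
    (F : MvPolynomial (Fin (n + 1)) Kqt) :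
    aeval (specializeOff T) F = aeval (fun i : Fin n => C tk⁻¹ * X i.castSucc)
      (aeval (specializeOff (stripLast T)) (aeval (insertZeroSubst (Fin.last n)) F)) := by
  rw [aeval_aeval, aeval_aeval]
  refine congrArg (fun f => aeval f F) (funext fun r => ?_)
  induction r using Fin.lastCases with
  | last => simp [insertZeroSubst, specializeOff_of_notMem hT, chi_last]
  | cast i =>
    by_cases hi : i.castSucc ∈ T
    · have hi' : i ∈ stripLast T := by simpa [stripLast] using hi
      simp [insertZeroSubst, specializeOff_of_mem hi, specializeOff_of_mem hi', ← mul_assoc,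
        ← C_mul, tk_ne_zero]
    · have hi' : i ∉ stripLast T := by simpa [stripLast] using hi
      simp [insertZeroSubst, specializeOff_of_notMem hi, specializeOff_of_notMem hi',
        chi_castSucc T hT, pow_succ']

lemma aeval_specializeOff_of_last_notMem {T : Finset (Fin (n + 1))} (hT : Fin.last n ∉ T)
    {v : Fin (n + 1) → ℕ} (hv : v (Fin.last n) = 0) {F : MvPolynomial (Fin (n + 1)) Kqt} {c : Kqt}
    (h : aeval (specializeOff (stripLast T)) (aeval (insertZeroSubst (Fin.last n)) F) =
      C c * ∏ p, rectFactor (stripLast T) (Fin.init v) p) :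
    aeval (specializeOff T) F = C (c * tk⁻¹ ^ ∑ p, v (Fin.castSucc p)) * ∏ p, rectFactor T v p := by
  rw [aeval_specializeOff_eq_aeval_stripLast hT, h, map_mul, aeval_C, algebraMap_eq, map_prod,
    prod_congr rfl fun p _ => aeval_rectFactor_stripLast hT v p, prod_mul_distrib, ← map_prod,
    prod_pow_eq_pow_sum, Fin.prod_univ_castSucc (rectFactor T v), rectFactor, hv, range_zero,
    prod_empty, mul_one, C_mul, mul_assoc]

def affineShiftSubstInv : Fin (n + 1) → MvPolynomial (Fin (n + 1)) Kqt :=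
  Fin.cons (C qk⁻¹ * X (Fin.last n)) fun i => X i.castSucc

lemma aeval_affineShiftSubstInv_aeval_affineShiftSubst (F : MvPolynomial (Fin (n + 1)) Kqt) :
    aeval affineShiftSubstInv (aeval affineShiftSubst F) = F := by
  rw [aeval_aeval]
  conv_rhs => rw [← aeval_X_left_apply F]
  refine congrArg (fun f => aeval f F) (funext fun r => ?_)
  induction r using Fin.lastCases with
  | last => simp [affineShiftSubst, affineShiftSubstInv, ← mul_assoc, ← C_mul, qk_ne_zero]
  | cast i => simp [affineShiftSubst, affineShiftSubstInv]

lemma aeval_specializeOff_aeval_affineShiftSubstInv {T : Finset (Fin (n + 1))}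
    (hT : Fin.last n ∈ T) (G : MvPolynomial (Fin (n + 1)) Kqt) :
    aeval (specializeOff T) (aeval affineShiftSubstInv G) =
      aeval affineShiftSubstInv (aeval (specializeOff (rotate T)) G) := by
  rw [aeval_aeval, aeval_aeval]
  refine congrArg (fun f => aeval f G) (funext fun r => ?_)
  induction r using Fin.cases with
  | zero =>
    simp [affineShiftSubstInv, specializeOff_of_mem hT, specializeOff_of_mem (zero_mem_rotate.2 hT)]
  | succ i =>
    by_cases hi : i.castSucc ∈ T
    · simp [affineShiftSubstInv, specializeOff_of_mem hi,
        specializeOff_of_mem (succ_mem_rotate.2 hi)]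
    · simp [affineShiftSubstInv, specializeOff_of_notMem hi,
        specializeOff_of_notMem (succ_mem_rotate.not.2 hi), chi_rotate_succ T hT]

lemma aeval_rectFactor_rotate_succ {T : Finset (Fin (n + 1))} (hT : Fin.last n ∈ T)
    (v : Fin (n + 1) → ℕ) (i : Fin n) :
    aeval affineShiftSubstInv (rectFactor (rotate T) (affineShiftInv v) i.succ) =
      rectFactor T v i.castSucc := by
  simp [rectFactor, rectRoot, affineShiftSubstInv, affineShiftInv, Fin.init,
    chi_rotate_succ T hT, card_rotate]

/-- `x_n − 1` supplies the missing root `t^{χ_T(n)} = 1`; the other roots get multiplied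
by `q`. -/
lemma X_last_sub_one_mul_aeval_rectFactor_rotate_zero {T : Finset (Fin (n + 1))}
    (hT : Fin.last n ∈ T) {v : Fin (n + 1) → ℕ} (hv : v (Fin.last n) ≠ 0) :
    (X (Fin.last n) - C 1) *
        aeval affineShiftSubstInv (rectFactor (rotate T) (affineShiftInv v) 0) =
      C (qk⁻¹ ^ (v (Fin.last n) - 1)) * rectFactor T v (Fin.last n) := by
  have hroot : ∀ s, qk * rectRoot (rotate T) 0 s = rectRoot T (Fin.last n) (s + 1) := by
    intro s
    rcases eq_or_ne s 0 with rfl | hs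
    · simp [rectRoot, chi_rotate_zero T hT, mul_comm]
    · simp only [rectRoot, if_neg hs, card_rotate, Nat.add_one_ne_zero, if_false, pow_succ]
      ring
  have hlin := aeval_X_sub_C_of_eq_C_inv_mul affineShiftSubstInv (i := 0) (x := X (Fin.last n))
    qk_ne_zero (by simp [affineShiftSubstInv])
  have hw : v (Fin.last n) = v (Fin.last n) - 1 + 1 := by omega
  rw [rectFactor, rectFactor, map_prod, prod_congr rfl fun s _ => by rw [hlin, hroot],
    prod_mul_distrib, prod_const, card_range, affineShiftInv, Fin.cons_zero, hw, prod_range_succ',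
    ← hw, rectRoot, if_pos rfl, chi_last, pow_zero, map_pow]
  ring

lemma aeval_specializeOff_of_last_mem {T : Finset (Fin (n + 1))} (hT : Fin.last n ∈ T)
    {v : Fin (n + 1) → ℕ} (hv : v (Fin.last n) ≠ 0) {H : MvPolynomial (Fin (n + 1)) Kqt} {c : Kqt}
    (h : aeval (specializeOff (rotate T)) (aeval affineShiftSubst H) =
      C c * ∏ p, rectFactor (rotate T) (affineShiftInv v) p) :
    aeval (specializeOff T) ((X (Fin.last n) - C 1) * H) =
      C (c * qk⁻¹ ^ (v (Fin.last n) - 1)) * ∏ p, rectFactor T v p := by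
  rw [← aeval_affineShiftSubstInv_aeval_affineShiftSubst H, map_mul,
    aeval_specializeOff_aeval_affineShiftSubstInv hT, h, map_sub, aeval_X, aeval_C, algebraMap_eq,
    specializeOff_of_mem hT, map_mul, aeval_C, algebraMap_eq, map_prod, Fin.prod_univ_succ,
    prod_congr rfl fun i _ => aeval_rectFactor_rotate_succ hT v i,
    Fin.prod_univ_castSucc (rectFactor T v), C_mul]
  linear_combination (C c * ∏ i : Fin n, rectFactor T v i.castSucc) *
    X_last_sub_one_mul_aeval_rectFactor_rotate_zero hT hv

end Specialization

theorem exists_aeval_specializeOff_eq_C_mul_prod {N : ℕ} (T : Finset (Fin N)) (a j : ℕ)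
    (hpre : ∀ p : Fin N, (p : ℕ) < a → p ∈ T) {F : MvPolynomial (Fin N) Kqt}
    (hF : IsShiftedMacdonaldMultiple (rotatedRectangle T a j) F) :
    ∃ c, aeval (specializeOff T) F = C c * ∏ p, rectFactor T (rotatedRectangle T a j) p := by
  obtain ⟨s, hs⟩ : ∃ s, ∑ i, rotatedRectangle T a j i + N = s := ⟨_, rfl⟩
  induction s using Nat.strong_induction_on generalizing N T a j F with
  | _ s IH =>
  by_cases hv0 : ∀ p, rotatedRectangle T a j p = 0
  · refine ⟨coeff 0 F, ?_⟩
    conv_lhs => rw [hF.eq_C_of_eq_zero hv0]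
    rw [aeval_C, algebraMap_eq, prod_rectFactor_of_eq_zero T hv0, mul_one]
  obtain ⟨n, rfl⟩ : ∃ n, N = n + 1 :=
    Nat.exists_eq_add_one.2 (Nat.pos_of_ne_zero fun h => hv0 fun p => (h ▸ p).elim0)
  by_cases hT : Fin.last n ∈ T
  · have hvl := rotatedRectangle_last_ne_zero_of_mem hpre hT hv0
    obtain ⟨H, rfl⟩ := hF.X_last_sub_one_dvd hvl
    obtain ⟨a', j', hpre', hΨ⟩ := affineShiftInv_rotatedRectangle hpre hvl
    have hG := hF.aeval_affineShiftSubst hvl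
    have hsum := IsShiftedMacdonaldMultiple.sum_affineShiftInv hvl
    have hvpos : rotatedRectangle T a j (Fin.last n) ≤ ∑ i, rotatedRectangle T a j i :=
      single_le_sum (by simp) (mem_univ _)
    rw [hΨ] at hG hsum
    obtain ⟨c, hc⟩ := IH _ (by omega) (rotate T) a' j' hpre' hG rfl
    rw [← hΨ] at hc
    exact ⟨_, aeval_specializeOff_of_last_mem hT hvl hc⟩
  · have hvl : rotatedRectangle T a j (Fin.last n) = 0 := by simp [rotatedRectangle, hT]
    have hG := hF.aeval_insertZeroSubst_last hvl
    have hsum : ∑ i, rotatedRectangle T a j i = ∑ i, Fin.init (rotatedRectangle T a j) i := by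
      simp [Fin.sum_univ_castSucc, hvl, Fin.init]
    rw [init_rotatedRectangle] at hG hsum
    obtain ⟨c, hc⟩ := IH _ (by omega) (stripLast T) a j
      (fun p hp => by simpa [stripLast] using hpre p.castSucc hp) hG rfl
    rw [← init_rotatedRectangle] at hc
    exact ⟨_, aeval_specializeOff_of_last_notMem hT hvl hc⟩

section BetaPoint

variable {N k : ℕ}

/-- The point `x^{(β)}` of the statement. -/
def betaPoint (β : Fin k → Fin N) (i : Fin N) : MvPolynomial (Fin k) Kqt :=
  (∑ j : Fin k, if β j = i then (X j : MvPolynomial (Fin k) Kqt) else 0) +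
    (if ∀ j : Fin k, β j ≠ i then
      C (tk ^ (N - 1 - (i : ℕ) - (univ.filter fun l : Fin k => i < β l).card))
     else 0)

lemma card_filter_mem_map_lt (β : Fin k ↪ Fin N) (i : Fin N) :
    #{r | r ∈ univ.map β ∧ i < r} = #{l | i < β l} := by
  rw [← card_map β]
  congr 1
  ext r
  simp only [mem_filter, mem_univ, true_and, mem_map]
  constructor
  · rintro ⟨⟨l, rfl⟩, h⟩
    exact ⟨l, h, rfl⟩
  · rintro ⟨l, h, rfl⟩
    exact ⟨⟨l, rfl⟩, h⟩

lemma betaPoint_apply_self (β : Fin k ↪ Fin N) (j : Fin k) : betaPoint β (β j) = X j := by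
  rw [betaPoint, sum_eq_single j (fun l _ hl => if_neg (β.injective.ne hl)) (by simp), if_pos rfl,
    if_neg (not_forall.2 ⟨j, not_not.2 rfl⟩), add_zero]

lemma betaPoint_of_notMem (β : Fin k ↪ Fin N) {i : Fin N} (hi : i ∉ univ.map β) :
    betaPoint β i = C (tk ^ chi (univ.map β) i) := by
  have hne : ∀ j, β j ≠ i := fun j h => hi (h ▸ mem_map_of_mem β (mem_univ j))
  rw [betaPoint, sum_eq_zero fun j _ => if_neg (hne j), if_pos hne, zero_add, chi,
    card_filter_mem_map_lt]

lemma aeval_betaPoint_aeval_specializeOff (β : Fin k ↪ Fin N) (F : MvPolynomial (Fin N) Kqt) :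
    aeval (betaPoint β) (aeval (specializeOff (univ.map β)) F) = aeval (betaPoint β) F := by
  rw [aeval_aeval]
  refine congrArg (fun f => aeval f F) (funext fun i => ?_)
  by_cases hi : i ∈ univ.map β
  · simp [specializeOff_of_mem hi]
  · simp [specializeOff_of_notMem hi, betaPoint_of_notMem β hi]

lemma chi_map_apply (β : Fin k ↪ Fin N) (hβ : StrictMono β) (j : Fin k) :
    chi (univ.map β) (β j) = N + j - k - β j := by
  have hcard : #{l | β j < β l} = k - 1 - j := by
    simp_rw [hβ.lt_iff_lt]
    rw [← Fin.card_Ioi j]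
    congr 1
    ext l
    simp
  have := card_filter_mem_lt_add_le (univ.map β) (β j)
  rw [card_filter_mem_map_lt, hcard] at this
  rw [chi, card_filter_mem_map_lt, hcard]
  omega

lemma aeval_betaPoint_prod_rectFactor (β : Fin k ↪ Fin N) {v : Fin N → ℕ}
    (hv : ∀ i ∉ univ.map β, v i = 0) :
    aeval (betaPoint β) (∏ p, rectFactor (univ.map β) v p) =
      ∏ j, ∏ s ∈ range (v (β j)), (X j - C (rectRoot (univ.map β) (β j) s)) := by
  have hcompl : ∏ i ∈ (univ.map β)ᶜ, aeval (betaPoint β) (rectFactor (univ.map β) v i) = 1 :=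
    prod_eq_one fun i hi => by simp [rectFactor, hv i (mem_compl.1 hi)]
  rw [map_prod, ← prod_mul_prod_compl (univ.map β), prod_map, hcompl, mul_one]
  simp [rectFactor, betaPoint_apply_self]

lemma exists_aeval_betaPoint_eq_C_mul_prod (β : Fin k ↪ Fin N) {m : ℕ} (hm : m ≠ 0)
    {u : Fin N → ℕ} (huβ : ∀ j, u (β j) = m) (hu : ∀ i ∉ univ.map β, u i = 0)
    {F : MvPolynomial (Fin N) Kqt} (hF : IsShiftedMacdonaldMultiple u F) :
    ∃ c, aeval (betaPoint β) F =
      C c * ∏ j, ∏ s ∈ range m, (X j - C (rectRoot (univ.map β) (β j) s)) := by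
  have hrect : u = rotatedRectangle (univ.map β) 0 (m - 1) := by
    funext i
    by_cases hi : i ∈ univ.map β
    · obtain ⟨j, -, rfl⟩ := mem_map.1 hi
      simp only [rotatedRectangle, hi, huβ, if_true, Nat.not_lt_zero, if_false]
      omega
    · simp [rotatedRectangle, hi, hu i hi]
  obtain ⟨c, hc⟩ := exists_aeval_specializeOff_eq_C_mul_prod _ 0 (m - 1) (by simp) (hrect ▸ hF)
  refine ⟨c, ?_⟩
  rw [← hrect] at hc
  rw [← aeval_betaPoint_aeval_specializeOff, hc, map_mul, aeval_C, algebraMap_eq,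
    aeval_betaPoint_prod_rectFactor β hu]
  simp only [huβ]

lemma eq_one_of_aeval_betaPoint_eq_C_mul_prod (β : Fin k ↪ Fin N) {m : ℕ} {u : Fin N → ℕ}
    (huβ : ∀ j, u (β j) = m) (hu : ∀ i ∉ univ.map β, u i = 0) {M : MvPolynomial (Fin N) Kqt}
    (hM : MonicShiftedMacdonald u M) {c : Kqt}
    (hc : aeval (betaPoint β) M =
      C c * ∏ j, ∏ s ∈ range m, (X j - C (rectRoot (univ.map β) (β j) s))) :
    c = 1 := by
  have := congrArg (coeff (Finsupp.equivFunOnFinite.symm (u ∘ β))) hc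
  rwa [coeff_aeval_of_embedding β (betaPoint_apply_self β) (fun i hi => betaPoint_of_notMem β hi)
      hu hM.1, hM.2.1, coeff_C_mul, show u ∘ β = fun _ => m from funext huβ,
    coeff_prod_prod_X_sub_C (fun _ => m) fun j s => rectRoot (univ.map β) (β j) s, mul_one,
    eq_comm] at this

lemma prod_range_X_sub_C_rectRoot (β : Fin k ↪ Fin N) (hβ : StrictMono β) {m : ℕ} (hm : m ≠ 0)
    (j : Fin k) :
    ∏ s ∈ range m, (X j - C (rectRoot (univ.map β) (β j) s)) =
      (X j - C (tk ^ (N + (j : ℕ) - k - (β j : ℕ)))) *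
        ∏ l ∈ Icc 1 (m - 1), (X j - C (tk ^ (N - k) * qk ^ l)) := by
  have hcard : #(univ.map β) = k := by simp
  rw [Finset.prod_range_eq_mul_prod_Icc _ hm, rectRoot, if_pos rfl, chi_map_apply β hβ j,
    prod_congr rfl fun s hs => by
      rw [rectRoot, if_neg (by simp only [mem_Icc] at hs; omega), hcard]]

end BetaPoint

end ShiftedMacdonald

open ShiftedMacdonald

theorem permuted_rectangular_factorization_general
    (N k m : ℕ) (hm : 1 ≤ m)
    (β : Fin k → Fin N) (hβ : StrictMono β)
    (u : Fin N → ℕ) (hu : u = fun i : Fin N => if ∃ j : Fin k, β j = i then m else 0)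
    (M : MvPolynomial (Fin N) Kqt) (hM : MonicShiftedMacdonald u M) :
    aeval (fun i : Fin N =>
        (∑ j : Fin k, if β j = i then (X j : MvPolynomial (Fin k) Kqt) else 0) +
        (if ∀ j : Fin k, β j ≠ i then
          C (tk ^ (N - 1 - (i : ℕ) - (univ.filter fun l : Fin k => i < β l).card))
         else 0)) M =
      ∏ j : Fin k,
        ((X j - C (tk ^ (N + (j : ℕ) - k - (β j : ℕ)))) *
          ∏ l ∈ Icc 1 (m - 1), (X j - C (tk ^ (N - k) * qk ^ l))) := by
  let βe : Fin k ↪ Fin N := ⟨β, hβ.injective⟩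
  have huβ : ∀ j, u (βe j) = m := fun j => by simp [hu, βe]
  have hu₀ : ∀ i ∉ univ.map βe, u i = 0 := fun i hi => by
    simp only [mem_map, mem_univ, true_and, not_exists, βe, Function.Embedding.coeFn_mk] at hi
    simp [hu, hi]
  obtain ⟨c, hc⟩ := exists_aeval_betaPoint_eq_C_mul_prod βe (by omega) huβ hu₀
    hM.isShiftedMacdonaldMultiple
  show aeval (betaPoint βe) M = _
  rw [hc, eq_one_of_aeval_betaPoint_eq_C_mul_prod βe huβ hu₀ hM hc, C_1, one_mul]
  exact prod_congr rfl fun j _ => prod_range_X_sub_C_rectRoot βe hβ (by omega) j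

/-- Let `β[1] < … < β[k]` in `{1,…,N}`, let `u(β)` have entry `m` at the
positions `β[j]` and `0` elsewhere, and let `χ_β(i) = N − i − #{l : β[l] > i}`.  If `M`
is the monic shifted nonsymmetric Macdonald polynomial for `u(β)`, then substituting
`t^{χ_β(i)}` for each `x_i` with `i ∉ σ(β)` (keeping `x_{β[j]}` free, renamed as the `j`-th
variable) yields
`M(x^{(β)}) = Π_{j=1}^{k} (x_{β[j]} − t^{N+j−k−β[j]}) Π_{i=1}^{m−1} (x_{β[j]} − t^{N−k} q^i)`. -/
theorem permuted_rectangular_factorization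
    (N k m : ℕ) (hm : 1 ≤ m) (hk1 : 1 ≤ k) (hkN : k ≤ N)
    (β : Fin k → Fin N) (hβ : StrictMono β)
    (u : Fin N → ℕ) (hu : u = fun i : Fin N => if ∃ j : Fin k, β j = i then m else 0)
    (M : MvPolynomial (Fin N) Kqt) (hM : MonicShiftedMacdonald u M) :
    aeval (fun i : Fin N =>
        (∑ j : Fin k, if β j = i then (X j : MvPolynomial (Fin k) Kqt) else 0) +
        (if ∀ j : Fin k, β j ≠ i then
          C (tk ^ (N - 1 - (i : ℕ) - (univ.filter fun l : Fin k => i < β l).card))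
         else 0)) M =
      ∏ j : Fin k,
        ((X j - C (tk ^ (N + (j : ℕ) - k - (β j : ℕ)))) *
          ∏ l ∈ Icc 1 (m - 1), (X j - C (tk ^ (N - k) * qk ^ l))) :=
  permuted_rectangular_factorization_general N k m hm β hβ u hu M hM
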